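/- Let $\kappa, \sigma, T > 0$ and let $\phi \in \mathbb{C}$ with $0 < \Re(\phi) < \frac{2\kappa}{\sigma^2(2e^{\kappa T} - 1)}$. Define $G(t;\phi) = \frac{2\kappa}{\sigma^2 + e^{\kappa(T-t)}\left(\frac{2\kappa}{\phi} - \sigma^2\right)}$ for $t \in [0,T]$. Then $\sup_{t \in [0,T]} \Re(G(t;\phi)) = \Re(\phi)$, i.e., $\Re(G(t;\phi)) \le \Re(\phi)$ for all $t \in [0,T]$ with equality at $t = T$. -/

import Mathlib

/-! With `r = κ / Re φ`, the point `w = 2κ / φ` lies on the circle `‖w - r‖ = r`, because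
`w - r = r · conj φ / φ`, and `Re (2κ / z) ≤ Re φ` holds exactly for `z` outside the open disk
bounded by that circle. The denominator of `G` is `D = σ² + a (w - σ²)` with `a = e^{κ(T-t)} ≥ 1`,
so `D - r = a (w - r) + (a - 1)(r - σ²)`; since `|r - σ²| ≤ r` whenever `σ² Re φ ≤ 2κ`, the
triangle inequality gives `‖D - r‖ ≥ a r - (a - 1) r = r`. -/

noncomputable def GfunC (κ σ T : ℝ) (φ : ℂ) (t : ℝ) : ℂ :=
  (2 * κ : ℂ) / ((σ ^ 2 : ℝ) + (Real.exp (κ * (T - t)) : ℝ) * ((2 * κ : ℂ) / φ - (σ ^ 2 : ℝ)))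

open Complex ComplexConjugate

lemma norm_le_norm_smul_add_sub_one_smul {E : Type*} [SeminormedAddCommGroup E] [NormedSpace ℝ E]
    {u b : E} {a : ℝ} (hb : ‖b‖ ≤ ‖u‖) (ha : 1 ≤ a) :
    ‖u‖ ≤ ‖a • u + (a - 1) • b‖ := by
  have hab : ‖(a - 1) • b‖ ≤ (a - 1) * ‖u‖ := by
    rw [norm_smul, Real.norm_of_nonneg (by linarith)]
    exact mul_le_mul_of_nonneg_left hb (by linarith)
  calc ‖u‖ = a * ‖u‖ - (a - 1) * ‖u‖ := by ring
    _ ≤ ‖a • u‖ - ‖(a - 1) • b‖ := by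
        rw [norm_smul, Real.norm_of_nonneg (by linarith)]
        linarith
    _ ≤ ‖a • u + (a - 1) • b‖ := by
        simpa using norm_sub_norm_le (a • u) (-((a - 1) • b))

lemma re_inv_le_of_le_norm_sub {z : ℂ} {r : ℝ} (hr : 0 < r) (hz : r ≤ ‖z - r‖) :
    z⁻¹.re ≤ (2 * r)⁻¹ := by
  have hsq : r ^ 2 ≤ normSq (z - r) := by
    rw [← Complex.sq_norm]
    exact pow_le_pow_left₀ hr.le hz 2
  have hre : 2 * r * z.re ≤ normSq z := by
    simp only [normSq_apply, sub_re, sub_im, ofReal_re, ofReal_im, sub_zero] at hsq ⊢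
    nlinarith
  rw [inv_re]
  rcases (normSq_nonneg z).eq_or_lt with h0 | hpos
  · rw [← h0, div_zero]
    positivity
  · rw [div_le_iff₀ hpos, ← div_eq_inv_mul, le_div_iff₀ (by positivity)]
    linarith

lemma two_mul_div_sub_div_re (κ : ℝ) {φ : ℂ} (hφ : 0 < φ.re) :
    2 * κ / φ - (κ / φ.re : ℝ) = (κ / φ.re : ℝ) * (conj φ / φ) := by
  have hφ0 : φ ≠ 0 := fun h => by simp [h] at hφ
  have hconj : conj φ = 2 * φ.re - φ := by
    rw [eq_sub_iff_add_eq, add_comm, add_conj]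
    push_cast
    ring
  rw [hconj]
  push_cast
  field_simp [hφ.ne']

lemma norm_two_mul_div_sub_div_re {κ : ℝ} (hκ : 0 ≤ κ) {φ : ℂ} (hφ : 0 < φ.re) :
    ‖2 * κ / φ - (κ / φ.re : ℝ)‖ = κ / φ.re := by
  have hφ0 : φ ≠ 0 := fun h => by simp [h] at hφ
  rw [two_mul_div_sub_div_re κ hφ, norm_mul, norm_div, norm_conj, div_self (norm_ne_zero_iff.2 hφ0),
    mul_one, norm_real, Real.norm_of_nonneg (by positivity)]

lemma re_two_mul_div_le_re {κ s a : ℝ} {φ : ℂ} (hκ : 0 < κ) (hφ : 0 < φ.re) (hs : 0 ≤ s)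
    (hsφ : s * φ.re ≤ 2 * κ) (ha : 1 ≤ a) :
    (2 * κ / ((s : ℂ) + a * (2 * κ / φ - s))).re ≤ φ.re := by
  set r : ℝ := κ / φ.re with hr_def
  have hr : 0 < r := by positivity
  have hsr : |r - s| ≤ r := by
    have : s ≤ 2 * r := by rw [hr_def, ← mul_div_assoc, le_div_iff₀ hφ]; linarith
    rw [abs_sub_le_iff]
    constructor <;> linarith
  have hdecomp : (s : ℂ) + a * (2 * κ / φ - s) - r =
      a • (2 * κ / φ - r) + (a - 1) • ((r - s : ℝ) : ℂ) := by
    simp only [real_smul]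
    push_cast
    ring
  have hnorm : r ≤ ‖(s : ℂ) + a * (2 * κ / φ - s) - r‖ := by
    rw [hdecomp]
    convert norm_le_norm_smul_add_sub_one_smul _ ha using 1
    · exact (norm_two_mul_div_sub_div_re hκ.le hφ).symm
    · rwa [norm_real, Real.norm_eq_abs, norm_two_mul_div_sub_div_re hκ.le hφ]
  calc (2 * κ / ((s : ℂ) + a * (2 * κ / φ - s))).re
      = 2 * κ * ((s : ℂ) + a * (2 * κ / φ - s))⁻¹.re := by
        rw [div_eq_mul_inv, ← ofReal_ofNat, ← ofReal_mul, re_ofReal_mul]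
    _ ≤ 2 * κ * (2 * r)⁻¹ := by gcongr; exact re_inv_le_of_le_norm_sub hr hnorm
    _ = φ.re := by rw [hr_def]; field_simp

lemma GfunC_self {κ : ℝ} (hκ : κ ≠ 0) (σ T : ℝ) (φ : ℂ) : GfunC κ σ T φ T = φ := by
  have hκ2 : (2 * κ : ℂ) ≠ 0 := by exact_mod_cast mul_ne_zero two_ne_zero hκ
  rw [GfunC, sub_self, mul_zero, Real.exp_zero, ofReal_one, one_mul, add_sub_cancel,
    div_div_cancel₀ hκ2]

theorem stmt6_general (κ σ T : ℝ) (φ : ℂ) (hκ : 0 < κ) (hσ : 0 < σ)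
    (hφ : 0 < φ.re) (hφ2 : φ.re < 2 * κ / (σ ^ 2 * (2 * Real.exp (κ * T) - 1))) :
    (∀ t ∈ Set.Icc (0:ℝ) T, (GfunC κ σ T φ t).re ≤ φ.re) ∧
    (GfunC κ σ T φ T).re = φ.re := by
  refine ⟨fun t ht => ?_, by rw [GfunC_self hκ.ne']⟩
  have hA : 1 ≤ Real.exp (κ * T) := Real.one_le_exp (mul_nonneg hκ.le (ht.1.trans ht.2))
  have hσφ : σ ^ 2 * φ.re ≤ 2 * κ := by
    rw [lt_div_iff₀ (by nlinarith [pow_pos hσ 2])] at hφ2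
    nlinarith [pow_pos hσ 2]
  exact re_two_mul_div_le_re hκ hφ (sq_nonneg σ) hσφ
    (Real.one_le_exp (mul_nonneg hκ.le (sub_nonneg.2 ht.2)))

theorem stmt6 (κ σ T : ℝ) (φ : ℂ) (hκ : 0 < κ) (hσ : 0 < σ) (hT : 0 < T)
    (hφ : 0 < φ.re) (hφ2 : φ.re < 2 * κ / (σ ^ 2 * (2 * Real.exp (κ * T) - 1))) :
    (∀ t ∈ Set.Icc (0:ℝ) T, (GfunC κ σ T φ t).re ≤ φ.re) ∧
    (GfunC κ σ T φ T).re = φ.re :=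
  stmt6_general κ σ T φ hκ hσ hφ hφ2
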